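/- arXiv:2512.20035 — 2 statements merged into one kernel-verified Lean document; each statement's English description precedes it below -/
import Mathlib

section
/- Let T_λ f(u,v) = ∫_ℝ exp(i·λ·(u·t² + v²·t))·Φ(u,v,t)·f(t) dt with Φ continuous, compactly supported, and Φ ≥ 1 on [-2,2]³. Then for all sufficiently large λ, there exists f_λ ∈ L²(ℝ), f_λ ≠ 0, such that ‖T_λ f_λ‖_{L²(ℝ²)} ≥ c·λ^(-3/8)·‖f_λ‖_{L²(ℝ)} for a constant c > 0 independent of λ. -/
/-!
Take `f = 𝟙_[0, r⁴]` with `r = λ^(-1/8)`, so that `‖f‖₂ = r²`. For `u ∈ [0, 1/2]`,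
`v ∈ [0, r²/2]` and `t ∈ [0, r⁴]` the phase `λ (u t² + v² t)` lies in `[0, 3/4]`, so the
integrand of `T_λ f (u, v)` has real part at least `1/2` and `|T_λ f| ≥ r⁴/2` on a rectangle
of area `r²/4`. Hence `‖T_λ f‖₂ ≥ r⁵/4 = λ^(-3/8) ‖f‖₂ / 4`.
-/

open MeasureTheory Complex
open scoped ENNReal

section Lower

variable {X : Type*} [MeasurableSpace X] {μ : Measure X} {s : Set X}

theorem le_norm_setIntegral_of_le_re {g : X → ℂ} {c : ℝ} (hs : MeasurableSet s)
    (hμs : μ s ≠ ∞) (hg : IntegrableOn g s μ) (hc : ∀ x ∈ s, c ≤ (g x).re) :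
    c * μ.real s ≤ ‖∫ x in s, g x ∂μ‖ :=
  calc c * μ.real s ≤ ∫ x in s, (g x).re ∂μ := setIntegral_ge_of_const_le_real hs hμs hc hg.re
    _ = (∫ x in s, g x ∂μ).re := integral_re hg
    _ ≤ _ := re_le_norm _

theorem ofReal_mul_measure_rpow_le_eLpNorm {E : Type*} [NormedAddCommGroup E] {F : X → E}
    {a : ℝ} {p : ℝ≥0∞} (hs : MeasurableSet s) (hp : p ≠ 0) (hp_top : p ≠ ∞) (ha : 0 ≤ a)
    (hF : ∀ x ∈ s, a ≤ ‖F x‖) :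
    ENNReal.ofReal a * μ s ^ (1 / p.toReal) ≤ eLpNorm F p μ := by
  rw [← Real.enorm_of_nonneg ha, ← eLpNorm_indicator_const hs hp hp_top]
  refine eLpNorm_mono fun x => ?_
  by_cases hx : x ∈ s
  · simpa [hx, abs_of_nonneg ha] using hF x hx
  · simp [hx]

end Lower

theorem ENNReal.ofReal_sq_rpow_half {x : ℝ} (hx : 0 ≤ x) :
    ENNReal.ofReal (x ^ 2) ^ (1 / 2 : ℝ) = ENNReal.ofReal x := by
  rw [ENNReal.ofReal_rpow_of_nonneg (sq_nonneg x) (by norm_num), ← Real.sqrt_eq_rpow,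
    Real.sqrt_sq hx]

theorem half_le_re_exp_mul {θ a : ℝ} (hθ : |θ| ≤ 1) (ha : 1 ≤ a) :
    1 / 2 ≤ (exp (I * θ) * a).re := by
  have hcos : 1 / 2 ≤ Real.cos θ := by
    nlinarith [Real.one_sub_sq_div_two_le_cos (x := θ), sq_abs θ, abs_nonneg θ]
  rw [mul_comm I, re_mul_ofReal, exp_ofReal_mul_I_re]
  nlinarith

theorem abs_phase_le_one {lam r u v t : ℝ} (hlam : 0 ≤ lam) (hr : lam * r ^ 8 = 1)
    (hu : u ∈ Set.Icc (0 : ℝ) (1 / 2)) (hv : v ∈ Set.Icc 0 (r ^ 2 / 2))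
    (ht : t ∈ Set.Icc 0 (r ^ 4)) : |lam * (u * t ^ 2 + v ^ 2 * t)| ≤ 1 := by
  obtain ⟨hu0, hu1⟩ := hu
  obtain ⟨hv0, hv1⟩ := hv
  obtain ⟨ht0, ht1⟩ := ht
  have hut : u * t ^ 2 ≤ 1 / 2 * r ^ 8 := by
    have : t ^ 2 ≤ (r ^ 4) ^ 2 := pow_le_pow_left₀ ht0 ht1 2
    nlinarith
  have hvt : v ^ 2 * t ≤ (r ^ 2 / 2) ^ 2 * r ^ 4 :=
    mul_le_mul (pow_le_pow_left₀ hv0 hv1 2) ht1 ht0 (sq_nonneg _)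
  rw [abs_of_nonneg (by positivity)]
  nlinarith

/-- The operator `T_λ` of the statement. -/
noncomputable def oscillatoryOp (lam : ℝ) (Φ : ℝ × ℝ × ℝ → ℝ) (f : ℝ → ℂ) (p : ℝ × ℝ) : ℂ :=
  ∫ t : ℝ, exp (I * (lam * (p.1 * t ^ 2 + p.2 ^ 2 * t))) * (Φ (p.1, p.2, t) : ℂ) * f t

noncomputable def bump (r : ℝ) : ℝ → ℂ := (Set.Icc 0 (r ^ 4)).indicator fun _ => 1

theorem memLp_bump (r : ℝ) : MemLp (bump r) 2 volume :=
  memLp_indicator_const 2 measurableSet_Icc 1 (Or.inr (by simp))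

theorem eLpNorm_bump (r : ℝ) : eLpNorm (bump r) 2 volume = ENNReal.ofReal (r ^ 2) := by
  rw [bump, eLpNorm_indicator_const measurableSet_Icc two_ne_zero ENNReal.ofNat_ne_top,
    Real.volume_Icc, sub_zero, ENNReal.toReal_ofNat, show r ^ 4 = (r ^ 2) ^ 2 by ring,
    ENNReal.ofReal_sq_rpow_half (sq_nonneg r), enorm_one, one_mul]

section Operator

variable {Φ : ℝ × ℝ × ℝ → ℝ} {lam r : ℝ}

theorem le_norm_oscillatoryOp_bump (hΦcont : Continuous Φ)
    (hΦ1 : ∀ u v t : ℝ, u ∈ Set.Icc (-2 : ℝ) 2 → v ∈ Set.Icc (-2 : ℝ) 2 →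
      t ∈ Set.Icc (-2 : ℝ) 2 → 1 ≤ Φ (u, v, t))
    (hlam : 0 ≤ lam) (hr : lam * r ^ 8 = 1) (hr0 : 0 ≤ r) (hr1 : r ≤ 1) {p : ℝ × ℝ}
    (hp : p ∈ Set.Icc (0 : ℝ) (1 / 2) ×ˢ Set.Icc 0 (r ^ 2 / 2)) :
    r ^ 4 / 2 ≤ ‖oscillatoryOp lam Φ (bump r) p‖ := by
  obtain ⟨⟨hu0, hu1⟩, hv0, hv1⟩ := hp
  set g : ℝ → ℂ := fun t =>
    exp (I * (lam * (p.1 * t ^ 2 + p.2 ^ 2 * t))) * (Φ (p.1, p.2, t) : ℂ)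
  have hg : Continuous g := by fun_prop
  have hr2 : r ^ 2 ≤ 1 := pow_le_one₀ hr0 hr1
  have hr4 : r ^ 4 ≤ 1 := pow_le_one₀ hr0 hr1
  have hre : ∀ t ∈ Set.Icc 0 (r ^ 4), 1 / 2 ≤ (g t).re := fun t ht => by
    have := half_le_re_exp_mul (abs_phase_le_one hlam hr ⟨hu0, hu1⟩ ⟨hv0, hv1⟩ ht)
      (hΦ1 p.1 p.2 t ⟨by linarith, by linarith⟩ ⟨by linarith, by linarith⟩
        ⟨by linarith [ht.1], by linarith [ht.2]⟩)
    push_cast at this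
    exact this
  have hT : oscillatoryOp lam Φ (bump r) p = ∫ t in Set.Icc 0 (r ^ 4), g t := by
    rw [oscillatoryOp, bump, ← integral_indicator measurableSet_Icc]
    congr 1 with t
    by_cases ht : t ∈ Set.Icc 0 (r ^ 4) <;> simp [g, ht]
  have := le_norm_setIntegral_of_le_re (μ := volume) measurableSet_Icc (by simp)
    hg.integrableOn_Icc hre
  rw [hT]
  simpa [Real.volume_real_Icc, div_eq_inv_mul, hr0] using this

theorem ofReal_le_eLpNorm_oscillatoryOp_bump (hΦcont : Continuous Φ)
    (hΦ1 : ∀ u v t : ℝ, u ∈ Set.Icc (-2 : ℝ) 2 → v ∈ Set.Icc (-2 : ℝ) 2 →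
      t ∈ Set.Icc (-2 : ℝ) 2 → 1 ≤ Φ (u, v, t))
    (hlam : 0 ≤ lam) (hr : lam * r ^ 8 = 1) (hr0 : 0 ≤ r) (hr1 : r ≤ 1) :
    ENNReal.ofReal (r ^ 5 / 4) ≤ eLpNorm (oscillatoryOp lam Φ (bump r)) 2 volume := by
  have hS : volume (Set.Icc (0 : ℝ) (1 / 2) ×ˢ Set.Icc 0 (r ^ 2 / 2)) =
      ENNReal.ofReal ((r / 2) ^ 2) := by
    rw [Measure.volume_eq_prod, Measure.prod_prod, Real.volume_Icc, Real.volume_Icc,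
      ← ENNReal.ofReal_mul (by norm_num)]
    ring_nf
  have := ofReal_mul_measure_rpow_le_eLpNorm (μ := volume) (p := 2)
    (measurableSet_Icc.prod measurableSet_Icc) two_ne_zero ENNReal.ofNat_ne_top (by positivity)
    fun p hp => le_norm_oscillatoryOp_bump hΦcont hΦ1 hlam hr hr0 hr1 hp
  rw [hS, ENNReal.toReal_ofNat, ENNReal.ofReal_sq_rpow_half (by positivity),
    ← ENNReal.ofReal_mul (by positivity)] at this
  convert this using 2
  ring

end Operator

theorem stmt_12_general (Φ : ℝ × ℝ × ℝ → ℝ) (hΦcont : Continuous Φ)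
    (hΦ1 : ∀ u v t : ℝ, u ∈ Set.Icc (-2 : ℝ) 2 → v ∈ Set.Icc (-2 : ℝ) 2 →
      t ∈ Set.Icc (-2 : ℝ) 2 → 1 ≤ Φ (u, v, t)) :
    ∃ c > 0, ∃ Λ : ℝ, ∀ lam : ℝ, Λ ≤ lam → ∃ f : ℝ → ℂ,
      MemLp f 2 (volume : Measure ℝ) ∧ eLpNorm f 2 volume ≠ 0 ∧
      eLpNorm (fun p : ℝ × ℝ =>
          ∫ t : ℝ, Complex.exp (Complex.I * (lam * (p.1 * t ^ 2 + p.2 ^ 2 * t))) *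
            (Φ (p.1, p.2, t) : ℂ) * f t) 2 volume ≥
        ENNReal.ofReal (c * lam ^ (-(3:ℝ)/8)) * eLpNorm f 2 volume := by
  refine ⟨1 / 4, by norm_num, 1, fun lam hlam => ?_⟩
  have hlam0 : 0 < lam := one_pos.trans_le hlam
  set r := lam ^ (-(1 : ℝ) / 8)
  have hr0 : 0 < r := Real.rpow_pos_of_pos hlam0 _
  have hr1 : r ≤ 1 := Real.rpow_le_one_of_one_le_of_nonpos hlam (by norm_num)
  have hpow (n : ℕ) : r ^ n = lam ^ (-(n : ℝ) / 8) := by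
    rw [← Real.rpow_natCast, ← Real.rpow_mul hlam0.le]; ring_nf
  have hr : lam * r ^ 8 = 1 := by
    rw [hpow, show -((8 : ℕ) : ℝ) / 8 = -1 by norm_num, Real.rpow_neg_one,
      mul_inv_cancel₀ hlam0.ne']
  refine ⟨bump r, memLp_bump r, by simp [eLpNorm_bump, hr0.ne'], ?_⟩
  rw [ge_iff_le, eLpNorm_bump, ← ENNReal.ofReal_mul (by positivity)]
  refine le_of_eq_of_le ?_
    (ofReal_le_eLpNorm_oscillatoryOp_bump hΦcont hΦ1 hlam0.le hr hr0.le hr1)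
  rw [show lam ^ (-(3 : ℝ) / 8) = r ^ 3 by exact_mod_cast (hpow 3).symm]
  ring_nf

theorem stmt_12 (Φ : ℝ × ℝ × ℝ → ℝ) (hΦcont : Continuous Φ)
    (hΦsupp : HasCompactSupport Φ)
    (hΦ1 : ∀ u v t : ℝ, u ∈ Set.Icc (-2 : ℝ) 2 → v ∈ Set.Icc (-2 : ℝ) 2 →
      t ∈ Set.Icc (-2 : ℝ) 2 → 1 ≤ Φ (u, v, t)) :
    ∃ c > 0, ∃ Λ : ℝ, ∀ lam : ℝ, Λ ≤ lam → ∃ f : ℝ → ℂ,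
      MemLp f 2 (volume : Measure ℝ) ∧ eLpNorm f 2 volume ≠ 0 ∧
      eLpNorm (fun p : ℝ × ℝ =>
          ∫ t : ℝ, Complex.exp (Complex.I * (lam * (p.1 * t ^ 2 + p.2 ^ 2 * t))) *
            (Φ (p.1, p.2, t) : ℂ) * f t) 2 volume ≥
        ENNReal.ofReal (c * lam ^ (-(3:ℝ)/8)) * eLpNorm f 2 volume :=
  stmt_12_general Φ hΦcont hΦ1
end

section
/- There is no constant C and no exponent α > 3/8 such that the operator T_λ f(u,v) = ∫_ℝ exp(i·λ·(u·t² + v²·t))·Φ(u,v,t)·f(t) dt, with Φ continuous compactly supported and Φ(0,0,0) ≠ 0, satisfies ‖T_λ f‖_{L²(ℝ²)} ≤ C·λ^(-α)·‖f‖_{L²(ℝ)} for all λ ≥ 1 and all f ∈ L²(ℝ). -/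
/-!
Replacing `Φ` by `-Φ`, let `Φ ≥ m > 0` on a cube `[-δ, δ]³`, put `λ = ε⁻⁸` and test the operator
on the indicator `f` of `[-δε⁴, δε⁴]`. On the box `|u| ≤ δ`, `|v| ≤ δε²` the phase
`λ (u t² + v² t)` stays below `2δ³ ≤ 1/4`, so the real part of the integrand is at least `m / 2`
and `|T_λ f| ≥ m δ ε⁴` there. Hence `‖T_λ f‖₂ ≥ 2 m δ² ε⁵` while `‖f‖₂ = √(2δ) ε²`, i.e.
`‖T_λ‖ ≳ ε³ = λ^(-3/8)`, which no bound `C λ^(-α)` with `α > 3/8` can dominate as `ε → 0`.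
-/

open MeasureTheory Set Filter Topology
open scoped ENNReal

noncomputable def oscOp (Φ : ℝ × ℝ × ℝ → ℝ) (lam : ℝ) (f : ℝ → ℂ) (p : ℝ × ℝ) : ℂ :=
  ∫ t : ℝ, Complex.exp (Complex.I * (lam * (p.1 * t ^ 2 + p.2 ^ 2 * t))) *
    (Φ (p.1, p.2, t) : ℂ) * f t

lemma oscOp_neg (Φ : ℝ × ℝ × ℝ → ℝ) (lam : ℝ) (f : ℝ → ℂ) :
    oscOp (-Φ) lam f = -oscOp Φ lam f := by
  funext p
  simp [oscOp, ← integral_neg]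

lemma oscOp_indicator_one (Φ : ℝ × ℝ × ℝ → ℝ) (lam : ℝ) {s : Set ℝ} (hs : MeasurableSet s)
    (p : ℝ × ℝ) :
    oscOp Φ lam (s.indicator fun _ => 1) p =
      ∫ t in s, Complex.exp (Complex.I * (lam * (p.1 * t ^ 2 + p.2 ^ 2 * t))) *
        (Φ (p.1, p.2, t) : ℂ) := by
  rw [oscOp, ← integral_indicator hs]
  congr 1 with t
  by_cases ht : t ∈ s <;> simp [ht]

lemma exists_forall_abs_le_imp_le {Φ : ℝ × ℝ × ℝ → ℝ} (hΦ : ContinuousAt Φ (0, 0, 0)) {m : ℝ}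
    (hm : m < Φ (0, 0, 0)) :
    ∃ δ, 0 < δ ∧ δ ≤ 1 / 2 ∧
      ∀ u v t : ℝ, |u| ≤ δ → |v| ≤ δ → |t| ≤ δ → m ≤ Φ (u, v, t) := by
  obtain ⟨η, hη, hball⟩ := Metric.eventually_nhds_iff.1 (hΦ.eventually (lt_mem_nhds hm))
  have hlt : min (η / 2) (1 / 2) < η := (min_le_left _ _).trans_lt (half_lt_self hη)
  refine ⟨min (η / 2) (1 / 2), by positivity, min_le_right _ _,
    fun u v t hu hv ht => (hball ?_).le⟩
  simp only [Prod.dist_eq, Real.dist_eq, sub_zero]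
  exact (max_le hu (max_le hv ht)).trans_lt hlt

lemma abs_phase_le {δ ε u v t : ℝ} (hε : 0 < ε) (hu : |u| ≤ δ) (hv : |v| ≤ δ * ε ^ 2)
    (ht : |t| ≤ δ * ε ^ 4) :
    |(ε ^ 8)⁻¹ * (u * t ^ 2 + v ^ 2 * t)| ≤ 2 * δ ^ 3 := by
  have hδ : 0 ≤ δ := (abs_nonneg u).trans hu
  have hut : |u * t ^ 2| ≤ δ * (δ * ε ^ 4) ^ 2 := by
    rw [abs_mul, abs_pow]; gcongr
  have hvt : |v ^ 2 * t| ≤ (δ * ε ^ 2) ^ 2 * (δ * ε ^ 4) := by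
    rw [abs_mul, abs_pow]; gcongr
  rw [abs_mul, abs_inv, abs_pow, abs_of_pos hε, inv_mul_le_iff₀ (by positivity)]
  calc |u * t ^ 2 + v ^ 2 * t| ≤ |u * t ^ 2| + |v ^ 2 * t| := abs_add_le _ _
    _ ≤ δ * (δ * ε ^ 4) ^ 2 + (δ * ε ^ 2) ^ 2 * (δ * ε ^ 4) := add_le_add hut hvt
    _ = ε ^ 8 * (2 * δ ^ 3) := by ring

lemma mul_sub_le_norm_setIntegral_exp_mul {θ Ψ : ℝ → ℝ} {a b c : ℝ} (hab : a ≤ b)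
    (hθ : Continuous θ) (hΨ : Continuous Ψ) (h : ∀ t ∈ Icc a b, c ≤ Real.cos (θ t) * Ψ t) :
    c * (b - a) ≤ ‖∫ t in Icc a b, Complex.exp (θ t * Complex.I) * Ψ t‖ := by
  have hint : IntegrableOn (fun t => Complex.exp (θ t * Complex.I) * Ψ t) (Icc a b) :=
    (by fun_prop : Continuous _).integrableOn_Icc
  calc c * (b - a) = volume.real (Icc a b) • c := by
        rw [Real.volume_real_Icc_of_le hab, smul_eq_mul, mul_comm]
    _ ≤ ∫ t in Icc a b, Real.cos (θ t) * Ψ t :=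
        setIntegral_ge_of_const_le measurableSet_Icc measure_Icc_lt_top.ne h
          (by fun_prop : Continuous _).integrableOn_Icc
    _ = (∫ t in Icc a b, Complex.exp (θ t * Complex.I) * Ψ t).re := by
        rw [← Complex.reCLM_apply, ← ContinuousLinearMap.integral_comp_comm _ hint]
        simp only [Complex.reCLM_apply, Complex.re_mul_ofReal, Complex.exp_ofReal_mul_I_re]
    _ ≤ _ := Complex.re_le_norm _

lemma mul_le_norm_oscOp_indicator {Φ : ℝ × ℝ × ℝ → ℝ} (hΦ : Continuous Φ) {m δ ε : ℝ}
    (hm0 : 0 ≤ m) (hδ : δ ≤ 1 / 2)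
    (hm : ∀ u v t : ℝ, |u| ≤ δ → |v| ≤ δ → |t| ≤ δ → m ≤ Φ (u, v, t))
    (hε0 : 0 < ε) (hε1 : ε ≤ 1) {p : ℝ × ℝ}
    (hp : p ∈ Icc (-δ) δ ×ˢ Icc (-(δ * ε ^ 2)) (δ * ε ^ 2)) :
    m * (δ * ε ^ 4) ≤
      ‖oscOp Φ (ε ^ 8)⁻¹ ((Icc (-(δ * ε ^ 4)) (δ * ε ^ 4)).indicator fun _ => 1) p‖ := by
  obtain ⟨u, v⟩ := p
  obtain ⟨hu, hv⟩ := hp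
  have hu' : |u| ≤ δ := abs_le.2 hu
  have hv' : |v| ≤ δ * ε ^ 2 := abs_le.2 hv
  have hδ0 : 0 ≤ δ := (abs_nonneg u).trans hu'
  have hε2 : δ * ε ^ 2 ≤ δ := mul_le_of_le_one_right hδ0 (pow_le_one₀ hε0.le hε1)
  have hε4 : δ * ε ^ 4 ≤ δ := mul_le_of_le_one_right hδ0 (pow_le_one₀ hε0.le hε1)
  have hbound : ∀ t ∈ Icc (-(δ * ε ^ 4)) (δ * ε ^ 4),
      m / 2 ≤ Real.cos ((ε ^ 8)⁻¹ * (u * t ^ 2 + v ^ 2 * t)) * Φ (u, v, t) := by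
    intro t ht
    have ht' : |t| ≤ δ * ε ^ 4 := abs_le.2 ht
    have hphase := abs_phase_le hε0 hu' hv' ht'
    have hδ3 : 2 * δ ^ 3 ≤ 1 := by nlinarith [pow_le_pow_left₀ hδ0 hδ 3]
    -- `cos x ≥ 1 - x² / 2 ≥ 1 / 2` once `|x| ≤ 1`
    have hcos : 1 / 2 ≤ Real.cos ((ε ^ 8)⁻¹ * (u * t ^ 2 + v ^ 2 * t)) := by
      nlinarith [Real.one_sub_sq_div_two_le_cos (x := (ε ^ 8)⁻¹ * (u * t ^ 2 + v ^ 2 * t)),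
        sq_abs ((ε ^ 8)⁻¹ * (u * t ^ 2 + v ^ 2 * t)),
        abs_nonneg ((ε ^ 8)⁻¹ * (u * t ^ 2 + v ^ 2 * t))]
    nlinarith [hm u v t hu' (hv'.trans hε2) (ht'.trans hε4)]
  have key := mul_sub_le_norm_setIntegral_exp_mul (neg_le_self (by positivity)) (by fun_prop)
    (by fun_prop) hbound
  rw [oscOp_indicator_one Φ _ measurableSet_Icc]
  calc m * (δ * ε ^ 4) = m / 2 * (δ * ε ^ 4 - -(δ * ε ^ 4)) := by ring
    _ ≤ _ := key
    _ = _ := by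
      congr 2 with t
      push_cast
      ring_nf

lemma mul_measure_rpow_le_eLpNorm {α E : Type*} [MeasurableSpace α] [NormedAddCommGroup E]
    {μ : Measure α} {p : ℝ≥0∞} (hp0 : p ≠ 0) (hp : p ≠ ∞) {s : Set α} (hs : MeasurableSet s)
    {g : α → E} {c : ℝ≥0∞} (h : ∀ x ∈ s, c ≤ ‖g x‖ₑ) :
    c * μ s ^ (1 / p.toReal) ≤ eLpNorm g p μ := by
  rw [← enorm_eq_self c, ← eLpNorm_indicator_const hs hp0 hp]
  refine eLpNorm_mono_enorm fun x => ?_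
  by_cases hx : x ∈ s
  · simpa [hx] using h x hx
  · simp [hx]

lemma ofReal_rpow_one_div_two {x : ℝ} (hx : 0 ≤ x) :
    ENNReal.ofReal x ^ (1 / (2 : ℝ≥0∞).toReal) = ENNReal.ofReal √x := by
  rw [ENNReal.ofReal_rpow_of_nonneg hx (by norm_num), Real.sqrt_eq_rpow]
  norm_num

lemma eLpNorm_indicator_Icc_one {r : ℝ} (hr : 0 ≤ r) :
    eLpNorm ((Icc (-r) r).indicator fun _ => (1 : ℂ)) 2 volume = ENNReal.ofReal √(2 * r) := by
  rw [eLpNorm_indicator_const measurableSet_Icc (by norm_num) (by norm_num), Real.volume_Icc,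
    enorm_one, one_mul, sub_neg_eq_add, ← two_mul, ofReal_rpow_one_div_two (by positivity)]

lemma ofReal_le_eLpNorm_oscOp {Φ : ℝ × ℝ × ℝ → ℝ} (hΦ : Continuous Φ) {m δ ε : ℝ}
    (hm0 : 0 ≤ m) (hδ0 : 0 ≤ δ) (hδ : δ ≤ 1 / 2)
    (hm : ∀ u v t : ℝ, |u| ≤ δ → |v| ≤ δ → |t| ≤ δ → m ≤ Φ (u, v, t))
    (hε0 : 0 < ε) (hε1 : ε ≤ 1) :
    ENNReal.ofReal (2 * m * δ ^ 2 * ε ^ 5) ≤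
      eLpNorm (oscOp Φ (ε ^ 8)⁻¹ ((Icc (-(δ * ε ^ 4)) (δ * ε ^ 4)).indicator fun _ => 1))
        2 volume := by
  have hbox : volume (Icc (-δ) δ ×ˢ Icc (-(δ * ε ^ 2)) (δ * ε ^ 2)) ^ (1 / (2 : ℝ≥0∞).toReal) =
      ENNReal.ofReal (2 * δ * ε) := by
    rw [Measure.volume_eq_prod, Measure.prod_prod, Real.volume_Icc, Real.volume_Icc,
      ← ENNReal.ofReal_mul (by linarith),
      show (δ - -δ) * (δ * ε ^ 2 - -(δ * ε ^ 2)) = (2 * δ * ε) ^ 2 by ring,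
      ofReal_rpow_one_div_two (sq_nonneg _), Real.sqrt_sq (by positivity)]
  calc ENNReal.ofReal (2 * m * δ ^ 2 * ε ^ 5)
      = ENNReal.ofReal (m * (δ * ε ^ 4)) * ENNReal.ofReal (2 * δ * ε) := by
        rw [← ENNReal.ofReal_mul (by positivity)]; ring_nf
    _ ≤ _ := by
        rw [← hbox]
        refine mul_measure_rpow_le_eLpNorm (by norm_num) (by norm_num)
          (measurableSet_Icc.prod measurableSet_Icc) fun p hp => ?_
        rw [← ofReal_norm]
        exact ENNReal.ofReal_le_ofReal
          (mul_le_norm_oscOp_indicator hΦ hm0 hδ hm hε0 hε1 hp)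

lemma nonpos_of_forall_le_mul_rpow {c K β : ℝ} (hβ : 0 < β)
    (h : ∀ ε ∈ Ioc (0 : ℝ) 1, c ≤ K * ε ^ β) : c ≤ 0 := by
  have hlim : Tendsto (fun ε : ℝ => K * ε ^ β) (𝓝[>] 0) (𝓝 0) := by
    simpa [Real.zero_rpow hβ.ne'] using
      ((Real.continuousAt_rpow_const 0 β (Or.inr hβ.le)).tendsto.const_mul K).mono_left
        nhdsWithin_le_nhds
  exact ge_of_tendsto hlim (eventually_of_mem (Ioc_mem_nhdsGT one_pos) h)

lemma not_forall_eLpNorm_oscOp_le_of_pos {Φ : ℝ × ℝ × ℝ → ℝ} (hΦ : Continuous Φ)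
    (h0 : 0 < Φ (0, 0, 0)) {C α : ℝ} (hα : 3 / 8 < α) :
    ¬ ∀ lam : ℝ, 1 ≤ lam → ∀ f : ℝ → ℂ, MemLp f 2 volume →
      eLpNorm (oscOp Φ lam f) 2 volume ≤ ENNReal.ofReal (C * lam ^ (-α)) * eLpNorm f 2 volume := by
  intro H
  obtain ⟨δ, hδ0, hδ1, hm⟩ := exists_forall_abs_le_imp_le hΦ.continuousAt (half_lt_self h0)
  suffices ∀ ε ∈ Ioc (0 : ℝ) 1,
      2 * (Φ (0, 0, 0) / 2) * δ ^ 2 ≤ C * √(2 * δ) * ε ^ (8 * α - 3) by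
    have := nonpos_of_forall_le_mul_rpow (by linarith) this
    have : 0 < 2 * (Φ (0, 0, 0) / 2) * δ ^ 2 := by positivity
    linarith
  rintro ε ⟨hε0, hε1⟩
  have hlam : 1 ≤ (ε ^ 8)⁻¹ := (one_le_inv₀ (by positivity)).2 (pow_le_one₀ hε0.le hε1)
  have hf : MemLp ((Icc (-(δ * ε ^ 4)) (δ * ε ^ 4)).indicator fun _ => (1 : ℂ)) 2 volume :=
    memLp_indicator_const 2 measurableSet_Icc 1 (Or.inr measure_Icc_lt_top.ne)
  have hT := (ofReal_le_eLpNorm_oscOp hΦ (by positivity) hδ0.le hδ1 hm hε0 hε1).trans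
    (H _ hlam _ hf)
  rw [eLpNorm_indicator_Icc_one (by positivity), ← ENNReal.ofReal_mul' (by positivity)] at hT
  have hT' := (ENNReal.ofReal_le_ofReal_iff'.1 hT).resolve_right (not_le.2 (by positivity))
  have hpow : ((ε ^ 8)⁻¹) ^ (-α) = ε ^ (8 * α - 3) * ε ^ 3 := by
    rw [Real.rpow_neg (by positivity), Real.inv_rpow (by positivity), inv_inv,
      ← Real.rpow_natCast, ← Real.rpow_mul hε0.le, ← Real.rpow_natCast ε 3,
      ← Real.rpow_add hε0]
    push_cast
    ring_nf
  have hsqrt : √(2 * (δ * ε ^ 4)) = √(2 * δ) * ε ^ 2 := by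
    rw [← mul_assoc, Real.sqrt_mul (by positivity), show ε ^ 4 = (ε ^ 2) ^ 2 by ring,
      Real.sqrt_sq (by positivity)]
  rw [hpow, hsqrt] at hT'
  refine le_of_mul_le_mul_right ?_ (pow_pos hε0 5)
  calc _ ≤ _ := hT'
    _ = _ := by ring

theorem stmt_14_general (Φ : ℝ × ℝ × ℝ → ℝ) (hΦcont : Continuous Φ)
    (hΦ0 : Φ (0, 0, 0) ≠ 0) :
    ¬ ∃ C : ℝ, ∃ α : ℝ, α > 3/8 ∧ ∀ lam : ℝ, 1 ≤ lam → ∀ f : ℝ → ℂ,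
      MemLp f 2 (volume : Measure ℝ) →
      eLpNorm (fun p : ℝ × ℝ =>
          ∫ t : ℝ, Complex.exp (Complex.I * (lam * (p.1 * t ^ 2 + p.2 ^ 2 * t))) *
            (Φ (p.1, p.2, t) : ℂ) * f t) 2 volume ≤
        ENNReal.ofReal (C * lam ^ (-α)) * eLpNorm f 2 volume := by
  rintro ⟨C, α, hα, H⟩
  rcases hΦ0.lt_or_gt with hneg | hpos
  · refine not_forall_eLpNorm_oscOp_le_of_pos (C := C) hΦcont.neg (by simpa using hneg) hα
      fun lam hlam f hf => ?_
    rw [oscOp_neg, eLpNorm_neg]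
    exact H lam hlam f hf
  · exact not_forall_eLpNorm_oscOp_le_of_pos hΦcont hpos hα H

theorem stmt_14 (Φ : ℝ × ℝ × ℝ → ℝ) (hΦcont : Continuous Φ)
    (hΦsupp : HasCompactSupport Φ) (hΦ0 : Φ (0, 0, 0) ≠ 0) :
    ¬ ∃ C : ℝ, ∃ α : ℝ, α > 3/8 ∧ ∀ lam : ℝ, 1 ≤ lam → ∀ f : ℝ → ℂ,
      MemLp f 2 (volume : Measure ℝ) →
      eLpNorm (fun p : ℝ × ℝ =>
          ∫ t : ℝ, Complex.exp (Complex.I * (lam * (p.1 * t ^ 2 + p.2 ^ 2 * t))) *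
            (Φ (p.1, p.2, t) : ℂ) * f t) 2 volume ≤
        ENNReal.ofReal (C * lam ^ (-α)) * eLpNorm f 2 volume :=
  stmt_14_general Φ hΦcont hΦ0
end
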